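/- arXiv:2402.09121 — 2 statements merged into one kernel-verified Lean document; each statement's English description precedes it below -/
import Mathlib

section
/- Consider the single-counter parameterized Bernoulli gadget Markov chain with parameter p ∈ [0,1]: states {q0,q1,q2} × ℕ³ with counters (a0,a1,x0), where (q0,(a0,a1,x0)) moves with probability 1 to (q1,(a0,x0,x0)); (q1,(a0,a1,x0)) with a1 > 0 moves with probability p to (q1,(a0,a1−1,x0)) and with probability 1−p to (q2,(a0+1,0,x0)); (q1,(a0,0,x0)) moves with probability 1 to (q2,(a0,0,x0)); and q2-states are absorbing. Then for all k, c ∈ ℕ, started at (q0,(k,0,c)): the probability of eventually reaching (q2,(k,0,c)) (i.e., reaching q2 without incrementing a0) equals p^c, and the probability of eventually reaching (q2,(k+1,0,c)) equals 1 − p^c. -/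
/-- Probability of a finite path: starting at `s`, then visiting the states in `l` in order. -/
def pathProb {S : Type} (P : S → S → ℝ) : S → List S → ℝ
  | _, [] => 1
  | s, t :: l => P s t * pathProb P t l

/-- `FirstHit s s' l` holds iff the path `s :: l` visits `s'` exactly once, as its last state. -/
def FirstHit {S : Type} (s s' : S) (l : List S) : Prop :=
  (l = [] ∧ s = s') ∨ (s ≠ s' ∧ l.getLast? = some s' ∧ ∀ t ∈ l.dropLast, t ≠ s')

open Classical in
/-- Probability of eventually reaching `s'` from `s`: the sum over all finite paths
from `s` to `s'` that visit `s'` only as their last state of the path probabilities. -/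
noncomputable def reachProb {S : Type} (P : S → S → ℝ) (s s' : S) : ℝ :=
  ∑' l : List S, if FirstHit s s' l then pathProb P s l else 0

/-- `IsPath P s l` holds iff every step of the path `s :: l` has positive probability. -/
def IsPath {S : Type} (P : S → S → ℝ) : S → List S → Prop
  | _, [] => True
  | s, t :: l => 0 < P s t ∧ IsPath P t l
/-- The control states of the parameterized Bernoulli gadget. -/
inductive Ctl
  | q0 | q1 | q2
  deriving DecidableEq

/-- States of the single-counter parameterized Bernoulli gadget Markov chain:
a control state together with the three counters `(a0, a1, x0)`. -/
abbrev BSt := Ctl × ℕ × ℕ × ℕ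

/-- Transition probabilities of the single-counter parameterized Bernoulli gadget
Markov chain with parameter `p`:
* `(q0,(a0,a1,x0))` moves with probability `1` to `(q1,(a0,x0,x0))`;
* `(q1,(a0,a1,x0))` with `a1 > 0` moves with probability `p` to `(q1,(a0,a1-1,x0))`
  and with probability `1 - p` to `(q2,(a0+1,0,x0))`;
* `(q1,(a0,0,x0))` moves with probability `1` to `(q2,(a0,0,x0))`;
* states with control `q2` are absorbing. -/
def pberP (p : ℝ) : BSt → BSt → ℝ
  | (Ctl.q0, a0, _, x0), s' => if s' = (Ctl.q1, a0, x0, x0) then 1 else 0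
  | (Ctl.q1, a0, a1 + 1, x0), s' =>
      if s' = (Ctl.q1, a0, a1, x0) then p
      else if s' = (Ctl.q2, a0 + 1, 0, x0) then 1 - p
      else 0
  | (Ctl.q1, a0, 0, x0), s' => if s' = (Ctl.q2, a0, 0, x0) then 1 else 0
  | (Ctl.q2, a0, a1, x0), s' => if s' = (Ctl.q2, a0, a1, x0) then 1 else 0

/-!
First-step analysis: for `s ≠ s'`, every path from `s` first hitting `s'` is a step `s → t`
followed by a path from `t` first hitting `s'`, so
`reachProb P s s' = ∑ t, P s t * reachProb P t s'` when `s` has finitely many successors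
(kept as a `HasSum`, since `tsum` alone loses summability).
`q2`-states are absorbing and so reach no other state. Hence, from `(q1,(k,n,c))`, the
probabilities `r n` of `(q2,(k,0,c))` and `f n` of `(q2,(k+1,0,c))` satisfy `r 0 = 1`, `f 0 = 0`,
`r (n+1) = p * r n` and `f (n+1) = p * f n + (1 - p)`, so `r n = p ^ n` and `f n = 1 - p ^ n`;
the step out of `q0` is deterministic and sets `a1 := c`.
-/

section FirstStep

variable {S : Type} {P : S → S → ℝ} {s s' t : S}

open Classical in
noncomputable def hitProb (P : S → S → ℝ) (s s' : S) (l : List S) : ℝ :=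
  if FirstHit s s' l then pathProb P s l else 0

theorem HasSum.reachProb_eq {r : ℝ} (h : HasSum (hitProb P s s') r) : reachProb P s s' = r :=
  h.tsum_eq

theorem firstHit_self_iff {l : List S} : FirstHit s s l ↔ l = [] := by
  simp [FirstHit]

theorem firstHit_cons_iff (h : s ≠ s') {l : List S} :
    FirstHit s s' (t :: l) ↔ FirstHit t s' l := by
  cases l with
  | nil => simp [FirstHit, h]
  | cons u l => simp [FirstHit, h, List.getLast?_cons_cons, List.dropLast_cons_cons]; tauto

theorem hasSum_hitProb_self (P : S → S → ℝ) (s : S) : HasSum (hitProb P s s) 1 := by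
  convert hasSum_ite_eq ([] : List S) (1 : ℝ) using 1
  funext l
  rcases l with _ | ⟨u, l⟩ <;> simp [hitProb, firstHit_self_iff, pathProb]

theorem hitProb_nil (h : s ≠ s') : hitProb P s s' [] = 0 := by
  simp [hitProb, FirstHit, h]

theorem hitProb_cons (h : s ≠ s') (l : List S) :
    hitProb P s s' (t :: l) = P s t * hitProb P t s' l := by
  by_cases hl : FirstHit t s' l
  · simp [hitProb, hl, (firstHit_cons_iff h).2 hl, pathProb]
  · simp [hitProb, hl, mt (firstHit_cons_iff h).1 hl]

theorem hitProb_eq_zero_of_absorbing (hs : ∀ t ≠ s, P s t = 0) (h : s ≠ s') :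
    hitProb P s s' = 0 := by
  refine funext fun l ↦ ?_
  induction l with
  | nil => exact hitProb_nil h
  | cons t l ih =>
    rw [hitProb_cons h]
    by_cases ht : t = s
    · simp [ht, ih]
    · simp [hs t ht]

theorem hasSum_hitProb_of_ne (h : s ≠ s') (T : Finset S) (hT : ∀ t ∉ T, P s t = 0)
    (hsum : ∀ t ∈ T, Summable (hitProb P t s')) :
    HasSum (hitProb P s s') (∑ t ∈ T, P s t * reachProb P t s') := by
  -- the paths whose first step goes to `t`
  let g (t : S) : List S → ℝ := Function.extend (List.cons t) (fun l ↦ P s t * hitProb P t s' l) 0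
  have hg : ∀ t ∈ T, HasSum (g t) (P s t * reachProb P t s') := fun t ht ↦
    (hasSum_extend_zero List.cons_injective).2 ((hsum t ht).hasSum.mul_left (P s t))
  convert hasSum_sum hg using 1
  funext l
  rcases l with _ | ⟨u, l⟩
  · simp [hitProb_nil h, g, Function.extend_apply']
  · have hgu : g u (u :: l) = P s u * hitProb P u s' l := List.cons_injective.extend_apply _ _ l
    rw [hitProb_cons h, ← hgu, Finset.sum_eq_single u]
    · intro t _ htu
      refine Function.extend_apply' _ _ _ ?_
      rintro ⟨l', hl'⟩
      exact htu (List.cons.inj hl').1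
    · intro hu
      rw [hgu, hT u hu, zero_mul]

theorem hasSum_hitProb_of_step {u : S} {r : ℝ} (h : s ≠ s') (hu : ∀ t ≠ u, P s t = 0)
    (hr : HasSum (hitProb P u s') r) : HasSum (hitProb P s s') (P s u * r) := by
  have hsum := hasSum_hitProb_of_ne h {u} (by simpa using hu) (by simpa using hr.summable)
  rwa [Finset.sum_singleton, hr.reachProb_eq] at hsum

theorem hasSum_hitProb_of_step_or_step {u₁ u₂ : S} {r₁ r₂ : ℝ} (h : s ≠ s') (hne : u₁ ≠ u₂)
    (hu : ∀ t, t ≠ u₁ → t ≠ u₂ → P s t = 0)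
    (hr₁ : HasSum (hitProb P u₁ s') r₁) (hr₂ : HasSum (hitProb P u₂ s') r₂) :
    HasSum (hitProb P s s') (P s u₁ * r₁ + P s u₂ * r₂) := by
  classical
  have hsum := hasSum_hitProb_of_ne h {u₁, u₂} (by simpa [not_or] using hu)
    (by simpa using ⟨hr₁.summable, hr₂.summable⟩)
  rwa [Finset.sum_pair hne, hr₁.reachProb_eq, hr₂.reachProb_eq] at hsum

end FirstStep

section Gadget

variable {p : ℝ}

theorem hasSum_hitProb_pberP_q2 {a b : ℕ × ℕ × ℕ} (h : a ≠ b) :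
    HasSum (hitProb (pberP p) (Ctl.q2, a) (Ctl.q2, b)) 0 := by
  rw [hitProb_eq_zero_of_absorbing (fun t ht ↦ by simp [pberP, ht]) (by simpa using h)]
  exact hasSum_zero

theorem hasSum_hitProb_pberP_q1_success (k x : ℕ) :
    ∀ n, HasSum (hitProb (pberP p) (Ctl.q1, k, n, x) (Ctl.q2, k, 0, x)) (p ^ n)
  | 0 => by
    have := hasSum_hitProb_of_step (s := (Ctl.q1, k, 0, x)) (by simp)
      (fun t ht ↦ by simp [pberP, ht]) (hasSum_hitProb_self (pberP p) (Ctl.q2, k, 0, x))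
    simpa [pberP] using this
  | n + 1 => by
    have := hasSum_hitProb_of_step_or_step (s := (Ctl.q1, k, n + 1, x)) (by simp) (by simp)
      (fun t h₁ h₂ ↦ by simp [pberP, h₁, h₂]) (hasSum_hitProb_pberP_q1_success k x n)
      (hasSum_hitProb_pberP_q2 (a := (k + 1, 0, x)) (by simp))
    simpa [pberP, pow_succ, mul_comm] using this

theorem hasSum_hitProb_pberP_q1_failure (k x : ℕ) :
    ∀ n, HasSum (hitProb (pberP p) (Ctl.q1, k, n, x) (Ctl.q2, k + 1, 0, x)) (1 - p ^ n)
  | 0 => by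
    have := hasSum_hitProb_of_step (s := (Ctl.q1, k, 0, x)) (by simp)
      (fun t ht ↦ by simp [pberP, ht])
      (hasSum_hitProb_pberP_q2 (p := p) (a := (k, 0, x)) (b := (k + 1, 0, x)) (by simp))
    simpa [pberP] using this
  | n + 1 => by
    have := hasSum_hitProb_of_step_or_step (s := (Ctl.q1, k, n + 1, x)) (by simp) (by simp)
      (fun t h₁ h₂ ↦ by simp [pberP, h₁, h₂]) (hasSum_hitProb_pberP_q1_failure k x n)
      (hasSum_hitProb_self (pberP p) (Ctl.q2, k + 1, 0, x))
    convert this using 1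
    simp [pberP]
    ring

end Gadget

theorem parameterized_bernoulli_gadget_general (p : ℝ) (k c : ℕ) :
    reachProb (pberP p) (Ctl.q0, k, 0, c) (Ctl.q2, k, 0, c) = p ^ c ∧
    reachProb (pberP p) (Ctl.q0, k, 0, c) (Ctl.q2, k + 1, 0, c) = 1 - p ^ c := by
  have start {s' : BSt} {r : ℝ} (hs' : (Ctl.q0, k, 0, c) ≠ s')
      (hr : HasSum (hitProb (pberP p) (Ctl.q1, k, c, c) s') r) :
      reachProb (pberP p) (Ctl.q0, k, 0, c) s' = r := by
    simpa [pberP] using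
      (hasSum_hitProb_of_step hs' (fun t ht ↦ by simp [pberP, ht]) hr).reachProb_eq
  exact ⟨start (by simp) (hasSum_hitProb_pberP_q1_success k c c),
    start (by simp) (hasSum_hitProb_pberP_q1_failure k c c)⟩

/-- In the single-counter parameterized Bernoulli gadget Markov chain
with parameter `p ∈ [0,1]`, started at `(q0,(k,0,c))`: the probability of eventually
reaching `(q2,(k,0,c))` (i.e., reaching `q2` without incrementing `a0`) equals `p^c`,
and the probability of eventually reaching `(q2,(k+1,0,c))` equals `1 - p^c`. -/
theorem parameterized_bernoulli_gadget (p : ℝ) (hp : p ∈ Set.Icc (0 : ℝ) 1) (k c : ℕ) :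
    reachProb (pberP p) (Ctl.q0, k, 0, c) (Ctl.q2, k, 0, c) = p ^ c ∧
    reachProb (pberP p) (Ctl.q0, k, 0, c) (Ctl.q2, k + 1, 0, c) = 1 - p ^ c :=
  parameterized_bernoulli_gadget_general p k c
end

section
/- Let α, β ∈ [0,1] and consider the SCM of the SIR model (Figure 5) viewed as a Markov chain, with counters (s, i, r, a0, a1, b0, b1), where per susceptible individual the infection loop succeeds (no infection) with per-contact probability α repeated i times, so each susceptible becomes infected with probability 1 − α^i and is recorded in b0, and each of the i infectious individuals recovers with probability β and is recorded in b1, after which the counters are updated to (s − b0, i + b0 − b1, r + b1) and the machine returns to q0 with a0 = a1 = b0 = b1 = 0. Then, started at q0 with counters (s, i, r, 0, 0, 0, 0), for all b0 ≤ s and b1 ≤ i, the probability that the first return to q0 has counters (s − b0, i + b0 − b1, r + b1, 0, 0, 0, 0) equals Pr(b0; s, 1 − α^i) · Pr(b1; i, β); that is, b0 is distributed as B(s, 1 − α^i), b1 is independently distributed as B(i, β), and one traversal from q0 back to q0 simulates exactly one time-step of the stochastic SIR compartmental model with these rates. -/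
/-- The control states `q0, …, q5` of the SCM of the SIR model. -/
inductive SCtl
  | q0 | q1 | q2 | q3 | q4 | q5
  deriving DecidableEq

/-- The seven counters `(s, i, r, a0, a1, b0, b1)` of the SCM of the SIR model. -/
structure Cnt where
  s : ℕ
  i : ℕ
  r : ℕ
  a0 : ℕ
  a1 : ℕ
  b0 : ℕ
  b1 : ℕ
  deriving DecidableEq

/-- States of the SIR SCM viewed as a Markov chain. -/
abbrev SirSt := SCtl × Cnt

/-- Transition probabilities of the SCM of the SIR model with per-contact no-infection
probability `α` and recovery probability `β`:
* from `q0` it loads `a0 ← s` and moves to `q1`;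
* in `q1`, if `a0 > 0` it decrements `a0`, loads `a1 ← i`, and moves to `q2`;
  if `a0 = 0` it moves to `q3`;
* in `q2` (the per-susceptible infection loop), if `a1 > 0` it stays in `q2` with
  probability `α` decrementing `a1`, and with probability `1 - α` increments `b0` and
  exits to `q1`; if `a1 = 0` it exits to `q1`;
* from `q3` it loads `a1 ← i` and moves to `q4`;
* in `q4` (the recovery loop), while `a1 > 0`, with probability `β` it increments `b1`
  and decrements `a1`, and with probability `1 - β` it just decrements `a1`;
  if `a1 = 0` it moves to `q5`;
* from `q5` it updates `s ← s - b0`, `i ← i + b0 - b1`, `r ← r + b1`, resets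
  `b0 ← 0`, `b1 ← 0`, and returns to `q0`. -/
def sirP (α β : ℝ) : SirSt → SirSt → ℝ
  | (SCtl.q0, c), s' => if s' = (SCtl.q1, { c with a0 := c.s }) then 1 else 0
  | (SCtl.q1, c), s' =>
      match c.a0 with
      | 0 => if s' = (SCtl.q3, c) then 1 else 0
      | a0' + 1 => if s' = (SCtl.q2, { c with a0 := a0', a1 := c.i }) then 1 else 0
  | (SCtl.q2, c), s' =>
      match c.a1 with
      | 0 => if s' = (SCtl.q1, c) then 1 else 0
      | a1' + 1 =>
          if s' = (SCtl.q2, { c with a1 := a1' }) then α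
          else if s' = (SCtl.q1, { c with b0 := c.b0 + 1 }) then 1 - α
          else 0
  | (SCtl.q3, c), s' => if s' = (SCtl.q4, { c with a1 := c.i }) then 1 else 0
  | (SCtl.q4, c), s' =>
      match c.a1 with
      | 0 => if s' = (SCtl.q5, c) then 1 else 0
      | a1' + 1 =>
          if s' = (SCtl.q4, { c with a1 := a1', b1 := c.b1 + 1 }) then β
          else if s' = (SCtl.q4, { c with a1 := a1' }) then 1 - β
          else 0
  | (SCtl.q5, c), s' =>
      if s' = (SCtl.q0, { s := c.s - c.b0, i := c.i + c.b0 - c.b1, r := c.r + c.b1,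
                          a0 := c.a0, a1 := c.a1, b0 := 0, b1 := 0 }) then 1 else 0

open Classical in
/-- The probability, starting from state `st`, that the first visit to a `q0`-state
is at the state `tgt`: the sum over all finite paths from `st` to `tgt` whose
intermediate states all have control state different from `q0`. -/
noncomputable def firstReturnProb (α β : ℝ) (st tgt : SirSt) : ℝ :=
  ∑' l : List SirSt,
    if l.getLast? = some tgt ∧ ∀ u ∈ l.dropLast, u.1 ≠ SCtl.q0 then
      pathProb (sirP α β) st l
    else 0

/-- The binomial probability `Pr(k; n, p) = C(n,k) · p^k · (1-p)^(n-k)` of exactly `k`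
successes among `n` independent Bernoulli trials with success probability `p`. -/
noncomputable def binomPMF (k n : ℕ) (p : ℝ) : ℝ :=
  (n.choose k : ℝ) * p ^ k * (1 - p) ^ (n - k)

/-!
In one traversal from `q0` back to `q0` each of the `s` susceptibles escapes infection only if
all `i` of its contacts fail, which happens with probability `α ^ i`, and each of the `i`
infectious individuals recovers with probability `β`, all independently. First-step analysis
turns the first-return probability into recursions along the loops of the machine; a loop of
`n` Bernoulli trials satisfies the Pascal recursion of the binomial law, so induction on the loop
counters shows that the chain re-enters `q0` after `k` infections and `m` recoveries with
probability `Pr(k; s, 1 - α^i) · Pr(m; i, β)`.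
-/

section Binomial

open Finset

lemma binomPMF_of_lt {k n : ℕ} (h : n < k) (p : ℝ) : binomPMF k n p = 0 := by
  simp [binomPMF, Nat.choose_eq_zero_of_lt h]

lemma binomPMF_zero_succ (n : ℕ) (p : ℝ) : binomPMF 0 (n + 1) p = (1 - p) * binomPMF 0 n p := by
  simp [binomPMF, pow_succ, mul_comm]

lemma binomPMF_succ_succ (k n : ℕ) (p : ℝ) :
    binomPMF (k + 1) (n + 1) p = p * binomPMF k n p + (1 - p) * binomPMF (k + 1) n p := by
  rcases le_or_gt (k + 1) n with hk | hk
  · obtain ⟨d, rfl⟩ := Nat.exists_eq_add_of_le hk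
    simp only [binomPMF, Nat.choose_succ_succ, Nat.cast_add, pow_succ,
      show k + 1 + d + 1 - (k + 1) = d + 1 by omega, show k + 1 + d - k = d + 1 by omega,
      show k + 1 + d - (k + 1) = d by omega]
    ring
  · simp [binomPMF, Nat.choose_succ_succ, Nat.choose_eq_zero_of_lt hk, pow_succ,
      show n + 1 - (k + 1) = n - k by omega]
    ring

/-- Conditioning on the outcome of the last of `n + 1` Bernoulli trials. -/
lemma sum_binomPMF_succ_mul (n : ℕ) (p : ℝ) (f : ℕ → ℝ) :
    ∑ j ∈ range (n + 2), binomPMF j (n + 1) p * f j =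
      p * ∑ j ∈ range (n + 1), binomPMF j n p * f (j + 1) +
        (1 - p) * ∑ j ∈ range (n + 1), binomPMF j n p * f j := by
  have hlast : ∑ j ∈ range (n + 1), binomPMF (j + 1) n p * f (j + 1) =
      ∑ j ∈ range (n + 1), binomPMF j n p * f j - binomPMF 0 n p * f 0 := by
    rw [sum_range_succ, binomPMF_of_lt (Nat.lt_succ_self n), sum_range_succ' _ n]
    ring
  rw [sum_range_succ']
  simp only [binomPMF_succ_succ, add_mul, sum_add_distrib, mul_assoc, ← mul_sum, hlast,
    binomPMF_zero_succ]
  ring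

lemma sum_binomPMF_mul_ite_eq (n b : ℕ) (p x : ℝ) :
    ∑ j ∈ range (n + 1), binomPMF j n p * (if j = b then x else 0) = binomPMF b n p * x := by
  simp only [mul_ite, mul_zero, sum_ite_eq', mem_range]
  split_ifs with hb
  · rfl
  · rw [binomPMF_of_lt (by omega), zero_mul]

end Binomial

section FirstHit

variable {S : Type} [DecidableEq S] (P : S → S → ℝ) (halt : S → Prop) [DecidablePred halt]
  (tgt : S)

noncomputable def firstHitTerm (st : S) (l : List S) : ℝ :=
  if l.getLast? = some tgt ∧ ∀ u ∈ l.dropLast, ¬ halt u then pathProb P st l else 0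

/-- The contribution of the path `l` once the chain has just entered `u`: a halting state
ends the path there. -/
noncomputable def continuationTerm (u : S) (l : List S) : ℝ :=
  if halt u then (if l = [] ∧ u = tgt then 1 else 0) else firstHitTerm P halt tgt u l

variable {P halt tgt}

lemma firstHitTerm_nil (st : S) : firstHitTerm P halt tgt st [] = 0 := by
  simp [firstHitTerm]

lemma firstHitTerm_cons (htgt : halt tgt) (st u : S) (l : List S) :
    firstHitTerm P halt tgt st (u :: l) = P st u * continuationTerm P halt tgt u l := by
  rcases l with _ | ⟨v, l⟩
  · have : u = tgt → halt u := fun h => h ▸ htgt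
    by_cases hu : halt u <;> by_cases h : u = tgt <;>
      simp_all [firstHitTerm, continuationTerm, pathProb]
  · by_cases hu : halt u <;>
      simp [firstHitTerm, continuationTerm, pathProb, List.getLast?_cons_cons, hu]

lemma hasSum_continuationTerm_of_halt {u : S} (hu : halt u) :
    HasSum (continuationTerm P halt tgt u) (if u = tgt then 1 else 0) := by
  convert hasSum_ite_eq ([] : List S) (if u = tgt then (1 : ℝ) else 0) using 2 with l
  by_cases hl : l = [] <;> simp [continuationTerm, hu, hl]

lemma continuationTerm_of_not_halt {u : S} (hu : ¬ halt u) :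
    continuationTerm P halt tgt u = firstHitTerm P halt tgt u := by
  funext l
  simp [continuationTerm, hu]

/-- First-step analysis. Stating it with `HasSum` rather than `tsum` carries the summability
of the path sums along with their values. -/
lemma hasSum_firstHitTerm (htgt : halt tgt) {st : S} {T : Finset S}
    (hT : ∀ u ∉ T, P st u = 0) {g : S → ℝ}
    (hg : ∀ u ∈ T, HasSum (continuationTerm P halt tgt u) (g u)) :
    HasSum (firstHitTerm P halt tgt st) (∑ u ∈ T, P st u * g u) := by
  let f : S → List S → ℝ := fun u l =>
    if l.head? = some u then P st u * continuationTerm P halt tgt u l.tail else 0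
  have hf : ∀ u ∈ T, HasSum (f u) (P st u * g u) := by
    intro u hu
    have hcomp : f u ∘ List.cons u = fun l => P st u * continuationTerm P halt tgt u l := by
      funext l
      simp [f]
    rw [← (List.cons_injective (a := u)).hasSum_iff, hcomp]
    · exact (hg u hu).mul_left _
    rintro (_ | ⟨v, l⟩) hl
    · simp [f]
    · have : v ≠ u := by rintro rfl; exact hl ⟨l, rfl⟩
      simp [f, this]
  convert hasSum_sum hf using 1
  funext l
  rcases l with _ | ⟨u, l⟩
  · simp [f, firstHitTerm_nil]
  · by_cases hu : u ∈ T
    · simp [f, firstHitTerm_cons htgt, hu]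
    · simp [f, firstHitTerm_cons htgt, hT u hu, hu]

lemma hasSum_firstHitTerm_of_eq_ite (htgt : halt tgt) {st v : S}
    (hP : ∀ u, P st u = if u = v then 1 else 0) {x : ℝ}
    (hv : HasSum (continuationTerm P halt tgt v) x) :
    HasSum (firstHitTerm P halt tgt st) x := by
  have hT : ∀ u ∉ ({v} : Finset S), P st u = 0 := fun u hu => by
    simp_all
  simpa [hP] using hasSum_firstHitTerm htgt hT (g := fun _ => x) (by simpa)

lemma hasSum_firstHitTerm_of_eq_ite_ite (htgt : halt tgt) {st u v : S} {p : ℝ} (huv : u ≠ v)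
    (hP : ∀ w, P st w = if w = u then p else if w = v then 1 - p else 0) {x y : ℝ}
    (hu : HasSum (continuationTerm P halt tgt u) x)
    (hv : HasSum (continuationTerm P halt tgt v) y) :
    HasSum (firstHitTerm P halt tgt st) (p * x + (1 - p) * y) := by
  have hT : ∀ w ∉ ({u, v} : Finset S), P st w = 0 := fun w hw => by
    simp_all
  have hg : ∀ w ∈ ({u, v} : Finset S),
      HasSum (continuationTerm P halt tgt w) (if w = u then x else y) := by
    simp only [Finset.mem_insert, Finset.mem_singleton]
    rintro w (rfl | rfl)
    · simpa
    · simpa [huv.symm]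
  simpa [Finset.sum_pair huv, hP, huv.symm] using hasSum_firstHitTerm htgt hT hg

end FirstHit

section SirChain

open Finset

variable (α β : ℝ)

abbrev IsQ0 (u : SirSt) : Prop := u.1 = SCtl.q0

noncomputable abbrev sirReturnTerm (tgt : SirSt) : SirSt → List SirSt → ℝ :=
  firstHitTerm (sirP α β) IsQ0 tgt

lemma firstReturnProb_eq_tsum (st tgt : SirSt) :
    firstReturnProb α β st tgt = ∑' l, sirReturnTerm α β tgt st l :=
  tsum_congr fun _ => if_congr Iff.rfl rfl rfl

/-- The state in which the chain re-enters `q0` after `k` infections and `m` recoveries. -/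
def sirOutcome (s i r k m : ℕ) : SirSt := (SCtl.q0, ⟨s - k, i + k - m, r + m, 0, 0, 0, 0⟩)

/-- `r + m` determines `m`, and then `i + k - m` determines `k`; the truncated `s - k` alone
would not. -/
lemma sirOutcome_eq_sirOutcome_iff {s i r k m b0 b1 : ℕ} (hk : k ≤ s) (hm : m ≤ i) :
    sirOutcome s i r k m = sirOutcome s i r b0 b1 ↔ k = b0 ∧ m = b1 := by
  simp only [sirOutcome, Prod.mk.injEq, Cnt.mk.injEq, true_and, and_true]
  omega

lemma sum_binomPMF_mul_sum_binomPMF_mul_ite_sirOutcome_eq {s i r b0 b1 : ℕ} (p q : ℝ) :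
    ∑ k ∈ range (s + 1), binomPMF k s p *
        ∑ m ∈ range (i + 1), binomPMF m i q *
          (if sirOutcome s i r k m = sirOutcome s i r b0 b1 then 1 else 0) =
      binomPMF b0 s p * binomPMF b1 i q := by
  have hinner : ∀ k ∈ range (s + 1),
      ∑ m ∈ range (i + 1), binomPMF m i q *
          (if sirOutcome s i r k m = sirOutcome s i r b0 b1 then 1 else 0) =
        if k = b0 then binomPMF b1 i q else 0 := by
    intro k hk
    calc _ = ∑ m ∈ range (i + 1), binomPMF m i q *
            (if m = b1 then (if k = b0 then 1 else 0) else 0) := by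
          refine sum_congr rfl fun m hm => ?_
          simp only [sirOutcome_eq_sirOutcome_iff (mem_range_succ_iff.mp hk)
            (mem_range_succ_iff.mp hm), and_comm (a := k = b0), ite_and]
      _ = _ := by rw [sum_binomPMF_mul_ite_eq, mul_ite, mul_one, mul_zero]
  rw [sum_congr rfl fun k hk => by rw [hinner k hk], sum_binomPMF_mul_ite_eq]

variable {α β} {tgt : SirSt}

lemma hasSum_sirReturnTerm_of_eq_ite (htgt : IsQ0 tgt) {st v : SirSt}
    (hP : ∀ u, sirP α β st u = if u = v then 1 else 0) (hv : ¬ IsQ0 v) {x : ℝ}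
    (h : HasSum (sirReturnTerm α β tgt v) x) : HasSum (sirReturnTerm α β tgt st) x :=
  hasSum_firstHitTerm_of_eq_ite htgt hP
    (by rwa [continuationTerm_of_not_halt hv])

lemma hasSum_sirReturnTerm_of_eq_ite_ite (htgt : IsQ0 tgt) {st u v : SirSt} {p : ℝ}
    (huv : u ≠ v) (hP : ∀ w, sirP α β st w = if w = u then p else if w = v then 1 - p else 0)
    (hu0 : ¬ IsQ0 u) (hv0 : ¬ IsQ0 v) {x y : ℝ}
    (hu : HasSum (sirReturnTerm α β tgt u) x) (hv : HasSum (sirReturnTerm α β tgt v) y) :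
    HasSum (sirReturnTerm α β tgt st) (p * x + (1 - p) * y) :=
  hasSum_firstHitTerm_of_eq_ite_ite htgt huv hP
    (by rwa [continuationTerm_of_not_halt hu0]) (by rwa [continuationTerm_of_not_halt hv0])

variable (α β)

lemma hasSum_sirReturnTerm_q5 (htgt : IsQ0 tgt) (s i r k m : ℕ) :
    HasSum (sirReturnTerm α β tgt (SCtl.q5, ⟨s, i, r, 0, 0, k, m⟩))
      (if sirOutcome s i r k m = tgt then 1 else 0) :=
  hasSum_firstHitTerm_of_eq_ite htgt (fun _ => rfl)
    (hasSum_continuationTerm_of_halt rfl)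

lemma hasSum_sirReturnTerm_q4 (htgt : IsQ0 tgt) (s i r k : ℕ) :
    ∀ n m, HasSum (sirReturnTerm α β tgt (SCtl.q4, ⟨s, i, r, 0, n, k, m⟩))
      (∑ j ∈ range (n + 1), binomPMF j n β * if sirOutcome s i r k (m + j) = tgt then 1 else 0)
  | 0, m => by
    simpa [binomPMF] using hasSum_sirReturnTerm_of_eq_ite htgt (fun _ => rfl) (by simp)
      (hasSum_sirReturnTerm_q5 α β htgt s i r k m)
  | n + 1, m => by
    have h := hasSum_sirReturnTerm_of_eq_ite_ite (st := (SCtl.q4, ⟨s, i, r, 0, n + 1, k, m⟩))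
      htgt (by simp) (fun _ => rfl) (by simp) (by simp)
      (hasSum_sirReturnTerm_q4 htgt s i r k n (m + 1)) (hasSum_sirReturnTerm_q4 htgt s i r k n m)
    rw [sum_binomPMF_succ_mul]
    simpa [add_assoc, add_comm 1] using h

lemma hasSum_sirReturnTerm_q3 (htgt : IsQ0 tgt) (s i r a k : ℕ) :
    HasSum (sirReturnTerm α β tgt (SCtl.q3, ⟨s, i, r, 0, a, k, 0⟩))
      (∑ m ∈ range (i + 1), binomPMF m i β * if sirOutcome s i r k m = tgt then 1 else 0) := by
  simpa using hasSum_sirReturnTerm_of_eq_ite htgt (fun _ => rfl) (by simp)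
    (hasSum_sirReturnTerm_q4 α β htgt s i r k i 0)

lemma hasSum_sirReturnTerm_q2 (htgt : IsQ0 tgt) {s i r n : ℕ} {v : ℕ → ℝ}
    (hv : ∀ a k, HasSum (sirReturnTerm α β tgt (SCtl.q1, ⟨s, i, r, n, a, k, 0⟩)) (v k)) :
    ∀ m k, HasSum (sirReturnTerm α β tgt (SCtl.q2, ⟨s, i, r, n, m, k, 0⟩))
      (α ^ m * v k + (1 - α ^ m) * v (k + 1))
  | 0, k => by
    simpa using hasSum_sirReturnTerm_of_eq_ite htgt (fun _ => rfl) (by simp) (hv 0 k)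
  | m + 1, k => by
    have h := hasSum_sirReturnTerm_of_eq_ite_ite (st := (SCtl.q2, ⟨s, i, r, n, m + 1, k, 0⟩))
      htgt (by simp) (fun _ => rfl) (by simp) (by simp)
      (hasSum_sirReturnTerm_q2 htgt hv m k) (hv (m + 1) (k + 1))
    convert h using 1
    ring

lemma hasSum_sirReturnTerm_q1 (htgt : IsQ0 tgt) {s i r : ℕ} {v : ℕ → ℝ}
    (hv : ∀ a k, HasSum (sirReturnTerm α β tgt (SCtl.q3, ⟨s, i, r, 0, a, k, 0⟩)) (v k)) :
    ∀ n a k, HasSum (sirReturnTerm α β tgt (SCtl.q1, ⟨s, i, r, n, a, k, 0⟩))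
      (∑ j ∈ range (n + 1), binomPMF j n (1 - α ^ i) * v (k + j))
  | 0, a, k => by
    simpa [binomPMF] using hasSum_sirReturnTerm_of_eq_ite htgt (fun _ => rfl) (by simp) (hv a k)
  | n + 1, a, k => by
    have h := hasSum_sirReturnTerm_of_eq_ite (st := (SCtl.q1, ⟨s, i, r, n + 1, a, k, 0⟩))
      htgt (fun _ => rfl) (by simp)
      (hasSum_sirReturnTerm_q2 α β htgt (hasSum_sirReturnTerm_q1 htgt hv n) i k)
    rw [sum_binomPMF_succ_mul, sub_sub_cancel]
    convert h using 1
    simp only [add_assoc, add_comm 1]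
    ring

lemma hasSum_sirReturnTerm_q0 (htgt : IsQ0 tgt) (s i r : ℕ) :
    HasSum (sirReturnTerm α β tgt (SCtl.q0, ⟨s, i, r, 0, 0, 0, 0⟩))
      (∑ k ∈ range (s + 1), binomPMF k s (1 - α ^ i) *
        ∑ m ∈ range (i + 1), binomPMF m i β * if sirOutcome s i r k m = tgt then 1 else 0) := by
  simpa using hasSum_sirReturnTerm_of_eq_ite htgt (fun _ => rfl) (by simp)
    (hasSum_sirReturnTerm_q1 α β htgt (hasSum_sirReturnTerm_q3 α β htgt s i r) s 0 0)

end SirChain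

theorem sir_scm_one_step_general (α β : ℝ) (s i r b0 b1 : ℕ) :
    firstReturnProb α β (SCtl.q0, ⟨s, i, r, 0, 0, 0, 0⟩)
        (SCtl.q0, ⟨s - b0, i + b0 - b1, r + b1, 0, 0, 0, 0⟩)
      = binomPMF b0 s (1 - α ^ i) * binomPMF b1 i β := by
  change firstReturnProb α β _ (sirOutcome s i r b0 b1) = _
  rw [firstReturnProb_eq_tsum,
    (hasSum_sirReturnTerm_q0 α β (tgt := sirOutcome s i r b0 b1) rfl s i r).tsum_eq]
  exact sum_binomPMF_mul_sum_binomPMF_mul_ite_sirOutcome_eq _ _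

/-- In the SCM of the SIR model, started at `q0` with counters
`(s, i, r, 0, 0, 0, 0)`, for all `b0 ≤ s` and `b1 ≤ i`, the probability that the first
return to `q0` has counters `(s - b0, i + b0 - b1, r + b1, 0, 0, 0, 0)` equals
`Pr(b0; s, 1 - α^i) · Pr(b1; i, β)`; that is, `b0` is distributed as `B(s, 1 - α^i)`,
`b1` is independently distributed as `B(i, β)`, and one traversal from `q0` back to `q0`
simulates exactly one time-step of the stochastic SIR compartmental model with these
rates. -/
theorem sir_scm_one_step (α β : ℝ) (hα : α ∈ Set.Icc (0 : ℝ) 1)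
    (hβ : β ∈ Set.Icc (0 : ℝ) 1) (s i r b0 b1 : ℕ) (hb0 : b0 ≤ s) (hb1 : b1 ≤ i) :
    firstReturnProb α β (SCtl.q0, ⟨s, i, r, 0, 0, 0, 0⟩)
        (SCtl.q0, ⟨s - b0, i + b0 - b1, r + b1, 0, 0, 0, 0⟩)
      = binomPMF b0 s (1 - α ^ i) * binomPMF b1 i β :=
  sir_scm_one_step_general α β s i r b0 b1
end
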